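/- Let t and s be first-order terms with t not a variable. Define maxNO(t,s) as the maximum cardinality of a set S of positions of s such that t matches s at every position in S and all distinct positions in S are non-overlapping w.r.t. t. Then maxNO satisfies the recursion: for s = f(s₁,...,s_k), maxNO(t,s) equals max(β, Σ_{π ∈ Pos_V(t)} maxNO(t, s|_π) + 1) if t matches s at the root, and β otherwise, where β = Σ_{j=1}^{k} maxNO(t, s_j). -/

import Mathlib

/-!
Let `A` be a largest non-overlapping set of matches of `t` in `s = f(s₁,…,s_k)`. If the root is
not in `A`, every position of `A` starts with an argument index `j`, and the positions starting
with `j` form a non-overlapping set of matches in `sⱼ`. If the root is in `A`, then `s = tσ`, and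
no other position of `A` may be a non-variable position of `t`; hence each lies below one of the
(pairwise prefix-incomparable) variable positions `π` of `t`, and the positions below `π` form a
non-overlapping set of matches in `s|_π`. Conversely, overlapping positions are prefix-comparable,
so non-overlapping sets of matches below pairwise prefix-incomparable positions glue together,
and the root may be added to the glued set over the variable positions of `t`.
-/

inductive Tm (S V : Type) : Type
  | var : V → Tm S V
  | app : S → List (Tm S V) → Tm S V

namespace Tm
variable {S V : Type}

def subst (σ : V → Tm S V) : Tm S V → Tm S V
  | var x => σ x
  | app f ts => app f (ts.attach.map fun u => subst σ u.1)
decreasing_by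
  have := List.sizeOf_lt_of_mem u.2
  simp only [Tm.app.sizeOf_spec]
  omega

inductive Occurs (x : V) : Tm S V → Prop
  | var : Occurs x (var x)
  | app {f : S} {ts : List (Tm S V)} {t : Tm S V} :
      t ∈ ts → Occurs x t → Occurs x (app f ts)

def iter (σ : V → Tm S V) (n : ℕ) (t : Tm S V) : Tm S V :=
  (subst σ)^[n] t

/-- The subterm of `t` at position `π`, if `π` is a position of `t`. -/
def subtermAt : Tm S V → List ℕ → Option (Tm S V)
  | t, [] => some t
  | var _, _ :: _ => none
  | app _ [], _ :: _ => none
  | app _ (u :: _), 0 :: π => subtermAt u π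
  | app f (_ :: ts), (i + 1) :: π => subtermAt (app f ts) (i :: π)

/-- `t` matches `s` at position `π`. -/
def Matches (t s : Tm S V) (π : List ℕ) : Prop :=
  ∃ σ : V → Tm S V, subtermAt s π = some (subst σ t)

/-- `π` is a non-variable (function symbol) position of `t`. -/
def IsAppPos (t : Tm S V) (π : List ℕ) : Prop :=
  ∃ (f : S) (ts : List (Tm S V)), subtermAt t π = some (app f ts)

/-- `π₁` and `π₂` are overlapping w.r.t. `t`. -/
def Overlap (t : Tm S V) (π₁ π₂ : List ℕ) : Prop :=
  ∃ τ, IsAppPos t τ ∧ (π₁ = π₂ ++ τ ∨ π₂ = π₁ ++ τ)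

/-- `Sset` is a set of pairwise non-overlapping occurrences of `t` in `s`. -/
def NOSet (t s : Tm S V) (Sset : Finset (List ℕ)) : Prop :=
  (∀ π ∈ Sset, Matches t s π) ∧
  (∀ π₁ ∈ Sset, ∀ π₂ ∈ Sset, π₁ ≠ π₂ → ¬ Overlap t π₁ π₂)

/-- Maximal number of pairwise non-overlapping occurrences of `t` in `s`. -/
noncomputable def maxNO (t s : Tm S V) : ℕ :=
  sSup {n | ∃ Sset : Finset (List ℕ), NOSet t s Sset ∧ Sset.card = n}


/-- The list of variable positions of a term. -/
def varPositions : Tm S V → List (List ℕ)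
  | var _ => [[]]
  | app _ [] => []
  | app f (u :: ts) =>
      (varPositions u).map (0 :: ·) ++
      (varPositions (app f ts)).map
        (fun π => match π with | i :: π' => (i + 1) :: π' | [] => [])

end Tm

namespace Tm
variable {S V : Type}

lemma subst_app (σ : V → Tm S V) (f : S) (ts : List (Tm S V)) :
    subst σ (app f ts) = app f (ts.map (subst σ)) := by
  simp [subst]

lemma subtermAt_append (s : Tm S V) (π τ : List ℕ) :
    subtermAt s (π ++ τ) = (subtermAt s π).bind (subtermAt · τ) := by
  induction s, π using subtermAt.induct <;> simp_all [subtermAt]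

lemma subtermAt_app_singleton (f : S) (ss : List (Tm S V)) (j : ℕ) :
    subtermAt (app f ss) [j] = ss[j]? := by
  induction ss generalizing j with
  | nil => simp [subtermAt]
  | cons u ts ih => cases j <;> simp_all [subtermAt]

lemma subtermAt_subst (σ : V → Tm S V) {t u : Tm S V} {π : List ℕ}
    (h : subtermAt t π = some u) : subtermAt (subst σ t) π = some (subst σ u) := by
  induction t, π using subtermAt.induct <;> simp_all [subtermAt, subst_app]

lemma subtermAt_var_append {t : Tm S V} {ρ : List ℕ} {x : V}
    (hx : subtermAt t ρ = some (var x)) (τ : List ℕ) :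
    subtermAt t (ρ ++ τ) = if τ = [] then some (var x) else none := by
  rw [subtermAt_append, hx]
  cases τ
  all_goals simp [subtermAt]

lemma not_isAppPos_of_var_prefix {t : Tm S V} {ρ : List ℕ} {x : V}
    (hx : subtermAt t ρ = some (var x)) (τ : List ℕ) : ¬ IsAppPos t (ρ ++ τ) := by
  rintro ⟨g, us, hg⟩
  rw [subtermAt_var_append hx] at hg
  split_ifs at hg
  all_goals simp at hg

lemma eq_of_var_prefix {t : Tm S V} {ρ₁ ρ₂ : List ℕ} {x y : V}
    (h₁ : subtermAt t ρ₁ = some (var x)) (h₂ : subtermAt t ρ₂ = some (var y))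
    (hp : ρ₁ <+: ρ₂) : ρ₁ = ρ₂ := by
  obtain ⟨τ, rfl⟩ := hp
  rw [subtermAt_var_append h₁] at h₂
  split_ifs at h₂ with hτ
  simp [hτ]

lemma isAppPos_or_var_prefix_of_subtermAt_subst {σ : V → Tm S V} {t u : Tm S V}
    {π : List ℕ} (h : subtermAt (subst σ t) π = some u) :
    IsAppPos t π ∨ ∃ ρ x, subtermAt t ρ = some (var x) ∧ ρ <+: π := by
  induction t, π using subtermAt.induct with
  | case1 t =>
    cases t with
    | var x => exact .inr ⟨[], x, by simp [subtermAt], List.nil_prefix⟩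
    | app f ts => exact .inl ⟨f, ts, by simp [subtermAt]⟩
  | case2 x i π => exact .inr ⟨[], x, by simp [subtermAt], List.nil_prefix⟩
  | case3 f i π => simp [subst_app, subtermAt] at h
  | case4 f u ts π ih =>
    simp only [subst_app, List.map_cons, subtermAt] at h
    rcases ih h with hπ | ⟨ρ, x, hx, hρ⟩
    · exact .inl (by simpa [IsAppPos, subtermAt] using hπ)
    · exact .inr ⟨0 :: ρ, x, by simpa [subtermAt] using hx, List.cons_prefix_cons.mpr ⟨rfl, hρ⟩⟩
  | case5 f u ts i π ih =>
    simp only [subst_app, List.map_cons, subtermAt] at h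
    rcases ih (by rwa [subst_app]) with hπ | ⟨ρ, x, hx, hρ⟩
    · exact .inl (by simpa [IsAppPos, subtermAt] using hπ)
    · cases ρ with
      | nil => simp [subtermAt] at hx
      | cons j ρ =>
        obtain ⟨rfl, hρπ⟩ := List.cons_prefix_cons.mp hρ
        exact .inr ⟨(j + 1) :: ρ, x, by simpa [subtermAt] using hx,
          List.cons_prefix_cons.mpr ⟨rfl, hρπ⟩⟩

def succHead : List ℕ → List ℕ
  | i :: π => (i + 1) :: π
  | [] => []

@[simp] lemma succHead_eq_nil {π : List ℕ} : succHead π = [] ↔ π = [] := by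
  cases π <;> simp [succHead]

@[simp] lemma succHead_eq_cons {π l : List ℕ} {j : ℕ} :
    succHead π = j :: l ↔ ∃ i, j = i + 1 ∧ π = i :: l := by
  cases π <;> simp [succHead, eq_comm]

lemma varPositions_app_cons (f : S) (u : Tm S V) (ts : List (Tm S V)) :
    varPositions (app f (u :: ts)) =
      (varPositions u).map (0 :: ·) ++ (varPositions (app f ts)).map succHead := by
  rw [varPositions]
  congr 2

lemma mem_varPositions {t : Tm S V} {π : List ℕ} :
    π ∈ varPositions t ↔ ∃ x, subtermAt t π = some (var x) := by
  induction t using varPositions.induct generalizing π with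
  | case1 x => cases π <;> simp [varPositions, subtermAt]
  | case2 f => cases π <;> simp [varPositions, subtermAt]
  | case3 f u ts ih₁ ih₂ =>
    rw [varPositions_app_cons]
    rcases π with _ | ⟨_ | i, l⟩ <;> simp [subtermAt, ih₁, ih₂]

lemma nodup_varPositions (t : Tm S V) : (varPositions t).Nodup := by
  induction t using varPositions.induct with
  | case1 x => simp [varPositions]
  | case2 f => simp [varPositions]
  | case3 f u ts ih₁ ih₂ =>
    have hne : ∀ ρ ∈ varPositions (app f ts), ρ ≠ [] := by
      rintro ρ hρ rfl
      simp [mem_varPositions, subtermAt] at hρ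
    rw [varPositions_app_cons]
    refine List.Nodup.append (ih₁.map fun _ _ h => List.cons_injective h) (ih₂.map_on ?_) ?_
    · intro ρ₁ h₁ ρ₂ h₂ h
      rcases ρ₁ with _ | ⟨i, l⟩
      · exact absurd rfl (hne _ h₁)
      rcases ρ₂ with _ | ⟨j, l'⟩
      · exact absurd rfl (hne _ h₂)
      simpa [succHead] using h
    · simp only [List.disjoint_right, List.mem_map]
      rintro _ ⟨ρ, -, rfl⟩ ⟨_, -, h⟩
      cases ρ <;> simp [succHead] at h

def positions : Tm S V → List (List ℕ)
  | var _ => [[]]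
  | app _ [] => [[]]
  | app f (u :: ts) => [] :: ((positions u).map (0 :: ·) ++ (positions (app f ts)).map succHead)

lemma mem_positions {s u : Tm S V} {π : List ℕ} (h : subtermAt s π = some u) :
    π ∈ positions s := by
  induction s, π using subtermAt.induct with
  | case1 s => cases s with
    | var x => simp [positions]
    | app f ts => cases ts <;> simp [positions]
  | case2 | case3 => simp [subtermAt] at h
  | case4 f u ts π ih => simp_all [positions, subtermAt]
  | case5 f u ts i π ih =>
    simp only [subtermAt] at h
    simp only [positions, List.mem_cons, List.mem_append, List.mem_map]
    exact .inr (.inr ⟨_, ih h, rfl⟩)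

lemma NOSet.mono {t s : Tm S V} {A B : Finset (List ℕ)} (hA : NOSet t s A) (hBA : B ⊆ A) :
    NOSet t s B :=
  ⟨fun π hπ => hA.1 π (hBA hπ), fun π₁ h₁ π₂ h₂ => hA.2 π₁ (hBA h₁) π₂ (hBA h₂)⟩

lemma NOSet.subset_positions {t s : Tm S V} {A : Finset (List ℕ)} (hA : NOSet t s A) :
    A ⊆ (positions s).toFinset := fun π hπ =>
  List.mem_toFinset.mpr (mem_positions (hA.1 π hπ).choose_spec)

-- `sSup` of an unbounded set of naturals is `0`; this bound makes `maxNO` a genuine maximum.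
lemma bddAbove_card_noSet (t s : Tm S V) :
    BddAbove {n | ∃ A : Finset (List ℕ), NOSet t s A ∧ A.card = n} :=
  ⟨(positions s).toFinset.card, by
    rintro _ ⟨A, hA, rfl⟩
    exact Finset.card_le_card hA.subset_positions⟩

lemma exists_noSet_card_eq_maxNO (t s : Tm S V) :
    ∃ A, NOSet t s A ∧ A.card = maxNO t s :=
  Nat.sSup_mem (s := {n | ∃ A : Finset (List ℕ), NOSet t s A ∧ A.card = n})
    ⟨0, ∅, by simp [NOSet], rfl⟩ (bddAbove_card_noSet t s)

lemma NOSet.card_le_maxNO {t s : Tm S V} {A : Finset (List ℕ)} (hA : NOSet t s A) :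
    A.card ≤ maxNO t s :=
  le_csSup (bddAbove_card_noSet t s) ⟨A, hA, rfl⟩

lemma Overlap.symm {t : Tm S V} {π₁ π₂ : List ℕ} (h : Overlap t π₁ π₂) : Overlap t π₂ π₁ :=
  let ⟨τ, hτ, h⟩ := h; ⟨τ, hτ, h.symm⟩

lemma Overlap.prefix_or_prefix {t : Tm S V} {π₁ π₂ : List ℕ} (h : Overlap t π₁ π₂) :
    π₁ <+: π₂ ∨ π₂ <+: π₁ := by
  obtain ⟨τ, -, rfl | rfl⟩ := h
  exacts [.inr (List.prefix_append _ _), .inl (List.prefix_append _ _)]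

lemma overlap_append_append_iff (t : Tm S V) (ρ τ₁ τ₂ : List ℕ) :
    Overlap t (ρ ++ τ₁) (ρ ++ τ₂) ↔ Overlap t τ₁ τ₂ := by
  simp only [Overlap, List.append_assoc, List.append_cancel_left_eq]

lemma NOSet.image_append {t s u : Tm S V} {A : Finset (List ℕ)} {ρ : List ℕ}
    (hA : NOSet t u A) (hρ : subtermAt s ρ = some u) : NOSet t s (A.image (ρ ++ ·)) := by
  refine ⟨?_, ?_⟩
  · simp only [Finset.mem_image, forall_exists_index, and_imp, forall_apply_eq_imp_iff₂]
    intro τ hτ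
    obtain ⟨σ, hσ⟩ := hA.1 τ hτ
    exact ⟨σ, by rw [subtermAt_append, hρ, Option.bind_some, hσ]⟩
  · simp only [Finset.mem_image, forall_exists_index, and_imp, forall_apply_eq_imp_iff₂,
      overlap_append_append_iff]
    intro τ₁ h₁ τ₂ h₂ hne
    exact hA.2 τ₁ h₁ τ₂ h₂ (by rintro rfl; exact hne rfl)

lemma NOSet.drop_of_prefix {t s u : Tm S V} {A : Finset (List ℕ)} {ρ : List ℕ}
    (hA : NOSet t s A) (hρ : subtermAt s ρ = some u) :
    NOSet t u ((A.filter (ρ <+: ·)).image (List.drop ρ.length)) := by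
  refine ⟨?_, ?_⟩
  · simp only [Finset.mem_image, Finset.mem_filter, forall_exists_index, and_imp]
    rintro _ _ hπ ⟨τ, rfl⟩ rfl
    obtain ⟨σ, hσ⟩ := hA.1 _ hπ
    rw [subtermAt_append, hρ, Option.bind_some] at hσ
    exact ⟨σ, by simpa using hσ⟩
  · simp only [Finset.mem_image, Finset.mem_filter, forall_exists_index, and_imp]
    rintro _ _ h₁ ⟨τ₁, rfl⟩ rfl _ _ h₂ ⟨τ₂, rfl⟩ rfl hne hov
    simp only [List.drop_left] at hne hov
    exact hA.2 _ h₁ _ h₂ (by simpa using hne) ((overlap_append_append_iff t ρ τ₁ τ₂).mpr hov)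

lemma NOSet.card_filter_prefix_le {t s : Tm S V} {A : Finset (List ℕ)} (hA : NOSet t s A)
    (ρ : List ℕ) : (A.filter (ρ <+: ·)).card ≤ maxNO t ((subtermAt s ρ).getD s) := by
  cases hρ : subtermAt s ρ with
  | none =>
    refine (Finset.card_eq_zero.mpr (Finset.filter_eq_empty_iff.mpr ?_)).trans_le (Nat.zero_le _)
    rintro π hπ ⟨τ, rfl⟩
    obtain ⟨σ, hσ⟩ := hA.1 _ hπ
    simp [subtermAt_append, hρ] at hσ
  | some u =>
    rw [Option.getD_some, ← Finset.card_image_of_injOn (f := List.drop ρ.length)]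
    · exact (hA.drop_of_prefix hρ).card_le_maxNO
    · intro π₁ h₁ π₂ h₂ h
      obtain ⟨τ₁, rfl⟩ := (Finset.mem_filter.mp h₁).2
      obtain ⟨τ₂, rfl⟩ := (Finset.mem_filter.mp h₂).2
      simpa using h

lemma NOSet.card_le_sum_maxNO {t s : Tm S V} {A : Finset (List ℕ)} (hA : NOSet t s A)
    (P : Finset (List ℕ)) (hcover : ∀ π ∈ A, ∃ ρ ∈ P, ρ <+: π) :
    A.card ≤ ∑ ρ ∈ P, maxNO t ((subtermAt s ρ).getD s) := by
  have hA_sub : A ⊆ P.biUnion (fun ρ => A.filter (ρ <+: ·)) := fun π hπ => by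
    obtain ⟨ρ, hρ, hρπ⟩ := hcover π hπ
    exact Finset.mem_biUnion.mpr ⟨ρ, hρ, Finset.mem_filter.mpr ⟨hπ, hρπ⟩⟩
  calc A.card ≤ (P.biUnion (fun ρ => A.filter (ρ <+: ·))).card := Finset.card_le_card hA_sub
    _ ≤ ∑ ρ ∈ P, (A.filter (ρ <+: ·)).card := Finset.card_biUnion_le
    _ ≤ _ := Finset.sum_le_sum fun ρ _ => hA.card_filter_prefix_le ρ

lemma eq_of_append_prefix_append {P : Set (List ℕ)} (hP : IsAntichain (· <+: ·) P)
    {ρ₁ ρ₂ τ₁ τ₂ : List ℕ} (h₁ : ρ₁ ∈ P) (h₂ : ρ₂ ∈ P) (h : ρ₁ ++ τ₁ <+: ρ₂ ++ τ₂) :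
    ρ₁ = ρ₂ := by
  rcases List.prefix_or_prefix_of_prefix ((List.prefix_append ρ₁ τ₁).trans h)
    (List.prefix_append ρ₂ τ₂) with hp | hp
  exacts [hP.eq h₁ h₂ hp, (hP.eq h₂ h₁ hp).symm]

lemma exists_noSet_card_eq_sum_maxNO (t s : Tm S V) (P : Finset (List ℕ))
    (hpos : ∀ ρ ∈ P, (subtermAt s ρ).isSome) (hP : IsAntichain (· <+: ·) (P : Set (List ℕ))) :
    ∃ A, NOSet t s A ∧ (∀ π ∈ A, ∃ ρ ∈ P, ρ <+: π) ∧
      A.card = ∑ ρ ∈ P, maxNO t ((subtermAt s ρ).getD s) := by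
  choose B hB hBcard using exists_noSet_card_eq_maxNO t
  have hsub : ∀ ρ ∈ P, subtermAt s ρ = some ((subtermAt s ρ).getD s) := fun ρ hρ => by
    obtain ⟨u, hu⟩ := Option.isSome_iff_exists.mp (hpos ρ hρ)
    simp [hu]
  set piece := fun ρ => (B ((subtermAt s ρ).getD s)).image (ρ ++ ·)
  have hpiece : ∀ ρ ∈ P, NOSet t s (piece ρ) := fun ρ hρ => (hB _).image_append (hsub ρ hρ)
  have hmem : ∀ π ∈ P.biUnion piece, ∃ ρ ∈ P, π ∈ piece ρ ∧ ∃ τ, π = ρ ++ τ := by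
    intro π hπ
    obtain ⟨ρ, hρ, hπρ⟩ := Finset.mem_biUnion.mp hπ
    obtain ⟨τ, -, rfl⟩ := Finset.mem_image.mp hπρ
    exact ⟨ρ, hρ, hπρ, τ, rfl⟩
  refine ⟨P.biUnion piece, ⟨fun π hπ => ?_, fun π₁ h₁ π₂ h₂ hne hov => ?_⟩, fun π hπ => ?_, ?_⟩
  · obtain ⟨ρ, hρ, hπρ, -⟩ := hmem π hπ
    exact (hpiece ρ hρ).1 π hπρ
  · obtain ⟨ρ₁, hρ₁, hπ₁, τ₁, rfl⟩ := hmem π₁ h₁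
    obtain ⟨ρ₂, hρ₂, hπ₂, τ₂, rfl⟩ := hmem π₂ h₂
    have : ρ₁ = ρ₂ := by
      rcases hov.prefix_or_prefix with hp | hp
      exacts [eq_of_append_prefix_append hP hρ₁ hρ₂ hp,
        (eq_of_append_prefix_append hP hρ₂ hρ₁ hp).symm]
    subst this
    exact (hpiece ρ₁ hρ₁).2 _ hπ₁ _ hπ₂ hne hov
  · obtain ⟨ρ, hρ, -, τ, rfl⟩ := hmem π hπ
    exact ⟨ρ, hρ, List.prefix_append ρ τ⟩
  · rw [Finset.card_biUnion]
    · refine Finset.sum_congr rfl fun ρ _ => ?_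
      rw [Finset.card_image_of_injective _ (List.append_right_injective ρ), hBcard]
    · intro ρ₁ hρ₁ ρ₂ hρ₂ hne
      refine Finset.disjoint_left.mpr fun π hπ₁ hπ₂ => hne ?_
      obtain ⟨τ₁, -, rfl⟩ := Finset.mem_image.mp hπ₁
      obtain ⟨τ₂, -, h⟩ := Finset.mem_image.mp hπ₂
      exact (eq_of_append_prefix_append hP hρ₂ hρ₁ (τ₁ := τ₂) (τ₂ := τ₁)
        ⟨[], by rw [List.append_nil, h]⟩).symm

def argPositions (n : ℕ) : Finset (List ℕ) :=
  (Finset.range n).image ([·])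

lemma isAntichain_argPositions (n : ℕ) :
    IsAntichain (· <+: ·) (argPositions n : Set (List ℕ)) := by
  intro ρ₁ h₁ ρ₂ h₂ hne hp
  simp only [argPositions, Finset.coe_image, Set.mem_image] at h₁ h₂
  obtain ⟨i, -, rfl⟩ := h₁
  obtain ⟨j, -, rfl⟩ := h₂
  exact hne (hp.eq_of_length rfl)

lemma sum_maxNO_argPositions (t : Tm S V) (f : S) (ss : List (Tm S V)) :
    ∑ ρ ∈ argPositions ss.length, maxNO t ((subtermAt (app f ss) ρ).getD (app f ss)) =
      (ss.map (maxNO t)).sum := by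
  rw [argPositions, Finset.sum_image (fun _ _ _ _ h => List.singleton_injective h),
    Finset.sum_range, ← Fin.sum_univ_fun_getElem]
  simp [subtermAt_app_singleton]

lemma sum_map_maxNO_le_maxNO_app (t : Tm S V) (f : S) (ss : List (Tm S V)) :
    (ss.map (maxNO t)).sum ≤ maxNO t (app f ss) := by
  have hpos : ∀ ρ ∈ argPositions ss.length, (subtermAt (app f ss) ρ).isSome := by
    simp [argPositions, subtermAt_app_singleton]
  obtain ⟨A, hA, -, hcard⟩ := exists_noSet_card_eq_sum_maxNO t (app f ss) _ hpos
    (isAntichain_argPositions _)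
  rw [← sum_maxNO_argPositions t f, ← hcard]
  exact hA.card_le_maxNO

lemma NOSet.card_le_sum_map_maxNO {t : Tm S V} {f : S} {ss : List (Tm S V)}
    {A : Finset (List ℕ)} (hA : NOSet t (app f ss) A) (hroot : [] ∉ A) :
    A.card ≤ (ss.map (maxNO t)).sum := by
  rw [← sum_maxNO_argPositions t f]
  refine hA.card_le_sum_maxNO _ fun π hπ => ?_
  obtain ⟨σ, hσ⟩ := hA.1 π hπ
  rcases π with _ | ⟨j, τ⟩
  · exact absurd hπ hroot
  refine ⟨[j], ?_, τ, rfl⟩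
  rw [← List.singleton_append, subtermAt_append, subtermAt_app_singleton] at hσ
  obtain ⟨u, hu, -⟩ := Option.bind_eq_some_iff.mp hσ
  simpa [argPositions] using (List.getElem?_eq_some_iff.mp hu).1

lemma NOSet.insert {t s : Tm S V} {A : Finset (List ℕ)} {π : List ℕ} (hA : NOSet t s A)
    (hπ : Matches t s π) (hov : ∀ π' ∈ A, ¬ Overlap t π' π) : NOSet t s (insert π A) := by
  refine ⟨?_, ?_⟩
  · simpa only [Finset.mem_insert, forall_eq_or_imp] using ⟨hπ, hA.1⟩
  · simp only [Finset.mem_insert, forall_eq_or_imp]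
    exact ⟨⟨fun h => absurd rfl h, fun π' h' _ h => hov π' h' h.symm⟩,
      fun π' h' => ⟨fun _ h => hov π' h' h, hA.2 π' h'⟩⟩

lemma isAntichain_varPositions (t : Tm S V) :
    IsAntichain (· <+: ·) ((varPositions t).toFinset : Set (List ℕ)) := by
  intro ρ₁ h₁ ρ₂ h₂ hne hp
  simp only [List.coe_toFinset, Set.mem_ofPred_eq, mem_varPositions] at h₁ h₂
  obtain ⟨x, hx⟩ := h₁
  obtain ⟨y, hy⟩ := h₂
  exact hne (eq_of_var_prefix hx hy hp)

lemma not_overlap_nil_of_var_prefix {t : Tm S V} (ht : ∀ x, t ≠ var x) {ρ : List ℕ} {x : V}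
    (hx : subtermAt t ρ = some (var x)) (τ : List ℕ) : ¬ Overlap t (ρ ++ τ) [] := by
  rintro ⟨μ, hμ, h | h⟩
  · exact not_isAppPos_of_var_prefix hx τ (by rwa [h])
  · obtain ⟨rfl, -⟩ := List.append_eq_nil_iff.mp (List.append_eq_nil_iff.mp h.symm).1
    exact ht x (by simpa [subtermAt] using hx)

lemma sum_maxNO_varPositions_add_one_le_maxNO {t s : Tm S V} (ht : ∀ x, t ≠ var x)
    (hm : Matches t s []) :
    ((varPositions t).map fun ρ => maxNO t ((subtermAt s ρ).getD s)).sum + 1 ≤ maxNO t s := by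
  obtain ⟨σ, hσ⟩ := hm
  have hpos : ∀ ρ ∈ (varPositions t).toFinset, (subtermAt s ρ).isSome := by
    intro ρ hρ
    obtain ⟨x, hx⟩ := mem_varPositions.mp (List.mem_toFinset.mp hρ)
    simp only [subtermAt, Option.some.injEq] at hσ
    simp [hσ, subtermAt_subst σ hx]
  obtain ⟨A, hA, hcover, hcard⟩ :=
    exists_noSet_card_eq_sum_maxNO t s _ hpos (isAntichain_varPositions t)
  have hroot : ∀ π ∈ A, ¬ Overlap t π [] := by
    intro π hπ
    obtain ⟨ρ, hρ, τ, rfl⟩ := hcover π hπ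
    obtain ⟨x, hx⟩ := mem_varPositions.mp (List.mem_toFinset.mp hρ)
    exact not_overlap_nil_of_var_prefix ht hx τ
  have hroot_app : IsAppPos t [] := by
    cases t with
    | var x => exact absurd rfl (ht x)
    | app g us => exact ⟨g, us, by simp [subtermAt]⟩
  have hnil : [] ∉ A := fun h => hroot [] h ⟨[], hroot_app, .inl rfl⟩
  rw [List.sum_toFinset _ (nodup_varPositions t)] at hcard
  rw [← hcard, ← Finset.card_insert_of_notMem hnil]
  exact (hA.insert ⟨σ, hσ⟩ hroot).card_le_maxNO

lemma NOSet.card_le_sum_maxNO_varPositions_add_one {t s : Tm S V} {A : Finset (List ℕ)}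
    (hA : NOSet t s A) (hroot : [] ∈ A) :
    A.card ≤ ((varPositions t).map fun ρ => maxNO t ((subtermAt s ρ).getD s)).sum + 1 := by
  obtain ⟨σ, hσ⟩ := hA.1 [] hroot
  simp only [subtermAt, Option.some.injEq] at hσ
  rw [← Finset.card_erase_add_one hroot, ← List.sum_toFinset _ (nodup_varPositions t)]
  refine Nat.add_le_add_right ((hA.mono (Finset.erase_subset _ _)).card_le_sum_maxNO _
    fun π hπ => ?_) 1
  obtain ⟨hne, hπ⟩ := Finset.mem_erase.mp hπ
  obtain ⟨σ', hσ'⟩ := hA.1 π hπ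
  rw [hσ] at hσ'
  rcases isAppPos_or_var_prefix_of_subtermAt_subst hσ' with happ | ⟨ρ, x, hx, hρ⟩
  · exact absurd ⟨π, happ, .inl rfl⟩ (hA.2 π hπ [] hroot hne)
  · exact ⟨ρ, List.mem_toFinset.mpr (mem_varPositions.mpr ⟨x, hx⟩), hρ⟩

end Tm

/-- The recursion underlying the dynamic programming algorithm for `maxNO`: for
`s = f(s₁,…,s_k)` and `β = Σⱼ maxNO(t, sⱼ)`, if `t` matches `s` at the root then
`maxNO(t,s) = max β (Σ_{π ∈ Pos_V(t)} maxNO(t, s|_π) + 1)`, and otherwise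
`maxNO(t,s) = β`. -/
theorem maxNO_recursion {S V : Type} (t : Tm S V) (ht : ∀ x : V, t ≠ Tm.var x)
    (f : S) (ss : List (Tm S V)) :
    (Tm.Matches t (Tm.app f ss) [] →
      Tm.maxNO t (Tm.app f ss) =
        max ((ss.map (Tm.maxNO t)).sum)
          (((Tm.varPositions t).map fun π =>
              Tm.maxNO t ((Tm.subtermAt (Tm.app f ss) π).getD (Tm.app f ss))).sum
            + 1)) ∧
    (¬ Tm.Matches t (Tm.app f ss) [] →
      Tm.maxNO t (Tm.app f ss) = (ss.map (Tm.maxNO t)).sum) := by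
  obtain ⟨A, hA, hcard⟩ := Tm.exists_noSet_card_eq_maxNO t (Tm.app f ss)
  refine ⟨fun hm => le_antisymm ?_ ?_, fun hm => le_antisymm ?_ ?_⟩
  · rw [← hcard]
    by_cases hroot : [] ∈ A
    · exact le_max_of_le_right (hA.card_le_sum_maxNO_varPositions_add_one hroot)
    · exact le_max_of_le_left (hA.card_le_sum_map_maxNO hroot)
  · exact max_le (Tm.sum_map_maxNO_le_maxNO_app t f ss)
      (Tm.sum_maxNO_varPositions_add_one_le_maxNO ht hm)
  · exact hcard ▸ hA.card_le_sum_map_maxNO fun hroot => hm (hA.1 [] hroot)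
  · exact Tm.sum_map_maxNO_le_maxNO_app t f ss
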